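/- arXiv:2210.14402 — 2 statements merged into one kernel-verified Lean document; each statement's English description precedes it below -/
import Mathlib

section
/- Let a ∈ ℝ and b > 0. Then the power series ₁F₁(a;b;t) = ∑_{n=0}^∞ ((a)_n/((b)_n n!)) t^n converges for every real t, the resulting function is differentiable on ℝ, and its derivative satisfies (d/dt) ₁F₁(a;b;t) = (a/b) · ₁F₁(a+1; b+1; t) for all t ∈ ℝ. -/
/-!
With `A = max |a| b`, the bounds `|(a)ₙ| ≤ (A)ₙ` and `(A)ₙ / (b)ₙ ≤ (A / b)ⁿ` dominate the
coefficients `cₙ(a, b)` of `₁F₁(a; b; t)` by those of `exp (A t / b)`, so the series converges absolutely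
everywhere and may be differentiated termwise. The shifted coefficients are read off from
`(x)ₙ₊₁ = x (x + 1)ₙ`, which gives `(n + 1) cₙ₊₁(a, b) = (a / b) cₙ(a + 1, b + 1)`.
-/

/-- The confluent hypergeometric function `₁F₁(a; b; t) = ∑ (a)_n / ((b)_n n!) tⁿ`,
where `(x)_n` is the ascending Pochhammer symbol. -/
noncomputable def oneF1 (a b t : ℝ) : ℝ :=
  ∑' n : ℕ, (ascPochhammer ℝ n).eval a / ((ascPochhammer ℝ n).eval b * (n.factorial : ℝ)) * t ^ n

open Polynomial Metric

lemma natCast_mul_pow_pred_le_two_mul_pow {R : ℝ} (hR : 1 ≤ R) (n : ℕ) :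
    n * R ^ (n - 1) ≤ (2 * R) ^ n := calc
  n * R ^ (n - 1) ≤ 2 ^ n * R ^ n := by
    gcongr
    · exact_mod_cast n.lt_two_pow_self.le
    exact n.sub_le 1
  _ = (2 * R) ^ n := (mul_pow 2 R n).symm

theorem hasDerivAt_tsum_mul_pow {𝕜 : Type*} [RCLike 𝕜]
    {c : ℕ → 𝕜} (hc : ∀ r : ℝ, Summable fun n => ‖c n‖ * r ^ n) (x : 𝕜) :
    HasDerivAt (fun z => ∑' n, c n * z ^ n) (∑' n : ℕ, ((n : 𝕜) + 1) * c (n + 1) * x ^ n) x := by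
  set R := ‖x‖ + 1
  have hx : x ∈ ball (0 : 𝕜) R := by simp [R]
  have hbound : ∀ n, ∀ y ∈ ball (0 : 𝕜) R, ‖c n * (n * y ^ (n - 1))‖ ≤ ‖c n‖ * (2 * R) ^ n := by
    intro n y hy
    rw [mem_ball_zero_iff] at hy
    rw [norm_mul, norm_mul, norm_pow, RCLike.norm_natCast]
    gcongr
    calc (n : ℝ) * ‖y‖ ^ (n - 1) ≤ n * R ^ (n - 1) := by gcongr
      _ ≤ (2 * R) ^ n := natCast_mul_pow_pred_le_two_mul_pow (by simp [R]) n
  have hsum_x : Summable fun n => c n * x ^ n :=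
    .of_norm (by simpa only [norm_mul, norm_pow] using hc ‖x‖)
  have hderiv := hasDerivAt_tsum_of_isPreconnected (hc (2 * R)) isOpen_ball
    (convex_ball (0 : 𝕜) R).isPreconnected (fun n y _ => (hasDerivAt_pow n y).const_mul (c n))
    hbound hx hsum_x hx
  rw [Summable.tsum_eq_zero_add (.of_norm_bounded (hc (2 * R)) (hbound · x hx))] at hderiv
  refine hderiv.congr_deriv ?_
  simp only [Nat.cast_zero, zero_mul, mul_zero, zero_add, Nat.add_sub_cancel, Nat.cast_succ]
  exact tsum_congr fun n => by ring

section Pochhammer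

variable {S : Type*} [CommRing S] [LinearOrder S] [IsStrictOrderedRing S]

theorem abs_ascPochhammer_eval_le {a A : S} (hA : |a| ≤ A) (n : ℕ) :
    |(ascPochhammer S n).eval a| ≤ (ascPochhammer S n).eval A := by
  induction n with
  | zero => simp
  | succ n ih =>
    rw [ascPochhammer_succ_eval, ascPochhammer_succ_eval, abs_mul]
    have h : |a + n| ≤ A + n := (abs_add_le a n).trans (by simpa using hA)
    exact mul_le_mul ih h (abs_nonneg _) ((abs_nonneg _).trans ih)

theorem pow_mul_ascPochhammer_eval_le {b A : S} (hb : 0 < b) (hbA : b ≤ A) (n : ℕ) :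
    b ^ n * (ascPochhammer S n).eval A ≤ A ^ n * (ascPochhammer S n).eval b := by
  induction n with
  | zero => simp
  | succ n ih =>
    have hn : (0 : S) ≤ n := n.cast_nonneg
    have hfactor : b * (A + n) ≤ A * (b + n) := by nlinarith
    rw [ascPochhammer_succ_eval, ascPochhammer_succ_eval, pow_succ, pow_succ]
    calc b ^ n * b * ((ascPochhammer S n).eval A * (A + n))
        = b ^ n * (ascPochhammer S n).eval A * (b * (A + n)) := by ring
      _ ≤ A ^ n * (ascPochhammer S n).eval b * (A * (b + n)) :=
        mul_le_mul ih hfactor (mul_nonneg hb.le (by linarith))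
          (mul_nonneg (pow_nonneg (hb.le.trans hbA) n) (ascPochhammer_pos n b hb).le)
      _ = A ^ n * A * ((ascPochhammer S n).eval b * (b + n)) := by ring

end Pochhammer

theorem ascPochhammer_succ_eval_eq_mul_eval_add_one {S : Type*} [CommSemiring S] (n : ℕ) (x : S) :
    (ascPochhammer S (n + 1)).eval x = x * (ascPochhammer S n).eval (x + 1) := by
  simp [ascPochhammer_succ_left, eval_comp]

noncomputable def oneF1Coeff (a b : ℝ) (n : ℕ) : ℝ :=
  (ascPochhammer ℝ n).eval a / ((ascPochhammer ℝ n).eval b * n.factorial)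

theorem abs_oneF1Coeff_le (a : ℝ) {b : ℝ} (hb : 0 < b) (n : ℕ) :
    |oneF1Coeff a b n| ≤ (max |a| b / b) ^ n / n.factorial := by
  set A := max |a| b
  have hPb := ascPochhammer_pos n b hb
  have hfac : (0 : ℝ) < n.factorial := Nat.cast_pos.mpr n.factorial_pos
  have hratio : (ascPochhammer ℝ n).eval A / (ascPochhammer ℝ n).eval b ≤ (A / b) ^ n := by
    rw [div_pow, div_le_div_iff₀ hPb (pow_pos hb n), mul_comm]
    exact pow_mul_ascPochhammer_eval_le hb (le_max_right _ _) n
  calc |oneF1Coeff a b n|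
      = |(ascPochhammer ℝ n).eval a| / ((ascPochhammer ℝ n).eval b * n.factorial) := by
        rw [oneF1Coeff, abs_div, abs_of_pos (mul_pos hPb hfac)]
    _ ≤ (ascPochhammer ℝ n).eval A / (ascPochhammer ℝ n).eval b / n.factorial := by
        rw [div_div]
        gcongr
        exact abs_ascPochhammer_eval_le (le_max_left _ _) n
    _ ≤ (A / b) ^ n / n.factorial := by gcongr

theorem summable_norm_oneF1Coeff_mul_pow (a : ℝ) {b : ℝ} (hb : 0 < b) (r : ℝ) :
    Summable fun n => ‖oneF1Coeff a b n‖ * r ^ n := by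
  refine (Real.summable_pow_div_factorial (max |a| b / b * |r|)).of_norm_bounded fun n => ?_
  rw [norm_mul, norm_norm, norm_pow, Real.norm_eq_abs, Real.norm_eq_abs, mul_pow, mul_div_right_comm]
  gcongr
  exact abs_oneF1Coeff_le a hb n

theorem succ_mul_oneF1Coeff_succ (a : ℝ) {b : ℝ} (hb : 0 < b) (n : ℕ) :
    ((n : ℝ) + 1) * oneF1Coeff a b (n + 1) = a / b * oneF1Coeff (a + 1) (b + 1) n := by
  have hPb := (ascPochhammer_pos n (b + 1) (by linarith)).ne'
  have hfac : (n.factorial : ℝ) ≠ 0 := by positivity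
  rw [oneF1Coeff, oneF1Coeff, ascPochhammer_succ_eval_eq_mul_eval_add_one,
    ascPochhammer_succ_eval_eq_mul_eval_add_one, Nat.factorial_succ]
  push_cast
  field_simp

theorem stmt7 (a b : ℝ) (hb : 0 < b) :
    (∀ t : ℝ, Summable fun n : ℕ =>
      (ascPochhammer ℝ n).eval a / ((ascPochhammer ℝ n).eval b * (n.factorial : ℝ)) * t ^ n) ∧
    (∀ t : ℝ, HasDerivAt (fun s : ℝ => oneF1 a b s)
      (a / b * oneF1 (a + 1) (b + 1) t) t) := by
  have hnorm := summable_norm_oneF1Coeff_mul_pow a hb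
  refine ⟨fun t => ?_, fun t => ?_⟩
  · have hsum : Summable fun n => oneF1Coeff a b n * t ^ n :=
      .of_norm (by simpa only [norm_mul, norm_pow] using hnorm ‖t‖)
    exact hsum
  · have hderiv := hasDerivAt_tsum_mul_pow hnorm t
    simp_rw [succ_mul_oneF1Coeff_succ a hb, mul_assoc, tsum_mul_left] at hderiv
    exact hderiv
end

section
/- Let d ≥ 2 and 1 ≤ m < d be integers, let s, q : ℝ^m → ℝ^{d−m} be differentiable functions, ζ ∈ ℝ^{d−m}, and β ∈ ℝ with |β| < 1. Define T : ℝ^m × ℝ^{d−m} → ℝ^m × ℝ^{d−m} by T(x₁, x₂) = (x₁, x₂ ⊙ (𝟙 + β tanh(s(x₁))) + e^{ζ} ⊙ tanh(q(x₁))). Then T is differentiable at every point (x₁, x₂) ∈ ℝ^d and the determinant of its Fréchet derivative equals ∏_{i=1}^{d−m} (1 + β tanh(s_i(x₁))), which is strictly positive. -/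
/-!
`T` fixes the first block of coordinates, so its derivative is block lower triangular with the
identity in the upper left corner, and its determinant is that of the derivative of the fibre map
`x₂ ↦ x₂ ⊙ (𝟙 + β tanh s(x₁)) + e^ζ ⊙ tanh q(x₁)`. This map is affine with diagonal linear part,
and each diagonal entry is positive because `|β tanh t| < 1`.
-/

/-- The affine coupling layer `T(x₁, x₂) = (x₁, x₂ ⊙ (𝟙 + β tanh(s(x₁))) + e^ζ ⊙ tanh(q(x₁)))`. -/
noncomputable def couplingT (m k : ℕ) (s q : (Fin m → ℝ) → Fin k → ℝ)
    (ζ : Fin k → ℝ) (β : ℝ) :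
    (Fin m → ℝ) × (Fin k → ℝ) → (Fin m → ℝ) × (Fin k → ℝ) :=
  fun p => (p.1, fun i =>
    p.2 i * (1 + β * Real.tanh (s p.1 i)) + Real.exp (ζ i) * Real.tanh (q p.1 i))

open LinearMap in
theorem LinearMap.det_eq_det_snd_comp_comp_inr_of_fst_comp_eq {R M₁ M₂ : Type*} [CommRing R]
    [AddCommGroup M₁] [Module R M₁] [Module.Free R M₁] [Module.Finite R M₁]
    [AddCommGroup M₂] [Module R M₂] [Module.Free R M₂] [Module.Finite R M₂]
    (f : Module.End R (M₁ × M₂)) (hf : fst R M₁ M₂ ∘ₗ f = fst R M₁ M₂) :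
    f.det = (snd R M₁ M₂ ∘ₗ f ∘ₗ inr R M₁ M₂).det := by
  classical
  let b₁ := Module.Free.chooseBasis R M₁
  let b₂ := Module.Free.chooseBasis R M₂
  have hf' : ∀ z, (f z).1 = z.1 := fun z => LinearMap.congr_fun hf z
  have hblocks : toMatrix (b₁.prod b₂) (b₁.prod b₂) f = Matrix.fromBlocks 1 0
      (Matrix.of fun i j => toMatrix (b₁.prod b₂) (b₁.prod b₂) f (Sum.inr i) (Sum.inl j))
      (toMatrix b₂ b₂ (snd R M₁ M₂ ∘ₗ f ∘ₗ inr R M₁ M₂)) := by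
    ext (i | i) (j | j) <;>
      simp [toMatrix_apply, hf', Matrix.one_apply, Finsupp.single_apply, eq_comm]
  rw [← det_toMatrix (b₁.prod b₂), hblocks, Matrix.det_fromBlocks_zero₁₂, Matrix.det_one, one_mul,
    det_toMatrix]

theorem det_fderiv_eq_det_fderiv_snd_of_fst_eq {𝕜 E F : Type*} [NontriviallyNormedField 𝕜]
    [NormedAddCommGroup E] [NormedSpace 𝕜 E] [FiniteDimensional 𝕜 E]
    [NormedAddCommGroup F] [NormedSpace 𝕜 F] [FiniteDimensional 𝕜 F]
    {T : E × F → E × F} (hT : ∀ z, (T z).1 = z.1) {p : E × F} (hTp : DifferentiableAt 𝕜 T p) :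
    (fderiv 𝕜 T p).det = (fderiv 𝕜 (fun y => (T (p.1, y)).2) p.2).det := by
  have hfst : (ContinuousLinearMap.fst 𝕜 E F).comp (fderiv 𝕜 T p) =
      ContinuousLinearMap.fst 𝕜 E F := by
    have h : HasFDerivAt Prod.fst ((ContinuousLinearMap.fst 𝕜 E F).comp (fderiv 𝕜 T p)) p := by
      simpa only [Function.comp_def, hT] using hasFDerivAt_fst.comp p hTp.hasFDerivAt
    exact h.unique hasFDerivAt_fst
  have hsnd : fderiv 𝕜 (fun y => (T (p.1, y)).2) p.2 = (ContinuousLinearMap.snd 𝕜 E F).comp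
      ((fderiv 𝕜 T p).comp (ContinuousLinearMap.inr 𝕜 E F)) := by
    have hinr : HasFDerivAt (fun y : F => (p.1, y)) (ContinuousLinearMap.inr 𝕜 E F) p.2 :=
      (hasFDerivAt_const p.1 p.2).prodMk (hasFDerivAt_id p.2)
    exact (hasFDerivAt_snd.comp p.2 (hTp.hasFDerivAt.comp p.2 hinr)).fderiv
  rw [hsnd]
  exact LinearMap.det_eq_det_snd_comp_comp_inr_of_fst_comp_eq _
    (congrArg ContinuousLinearMap.toLinearMap hfst)

theorem det_fderiv_mul_add {𝕜 ι : Type*} [NontriviallyNormedField 𝕜] [CompleteSpace 𝕜]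
    [Fintype ι] (c e y : ι → 𝕜) :
    (fderiv 𝕜 (fun y : ι → 𝕜 => fun i => y i * c i + e i) y).det = ∏ i, c i := by
  classical
  have h : (fun y : ι → 𝕜 => fun i => y i * c i + e i) =
      fun y => LinearMap.toContinuousLinearMap (Matrix.toLin' (Matrix.diagonal c)) y + e := by
    ext y i
    simp [Matrix.mulVec_diagonal, mul_comm]
  rw [h, fderiv_add_const, ContinuousLinearMap.fderiv, ContinuousLinearMap.det,
    LinearMap.coe_toContinuousLinearMap, LinearMap.det_toLin', Matrix.det_diagonal]

@[fun_prop]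
theorem Real.differentiable_tanh : Differentiable ℝ Real.tanh := by
  rw [show Real.tanh = fun x => Real.sinh x / Real.cosh x from funext Real.tanh_eq_sinh_div_cosh]
  exact Real.differentiable_sinh.div Real.differentiable_cosh fun x => (Real.cosh_pos x).ne'

theorem one_add_mul_tanh_pos {β : ℝ} (hβ : |β| < 1) (x : ℝ) : 0 < 1 + β * Real.tanh x := by
  have : |β * Real.tanh x| < 1 := by
    rw [abs_mul]
    exact mul_lt_one_of_nonneg_of_lt_one_left (abs_nonneg β) hβ (Real.abs_tanh_lt_one x).le
  linarith [neg_abs_le (β * Real.tanh x)]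

theorem differentiable_couplingT {m k : ℕ} {s q : (Fin m → ℝ) → Fin k → ℝ}
    (hs : Differentiable ℝ s) (hq : Differentiable ℝ q) (ζ : Fin k → ℝ) (β : ℝ) :
    Differentiable ℝ (couplingT m k s q ζ β) := by
  unfold couplingT
  fun_prop

theorem stmt11_general (d m : ℕ)
    (s q : (Fin m → ℝ) → Fin (d - m) → ℝ)
    (hs : Differentiable ℝ s) (hq : Differentiable ℝ q)
    (ζ : Fin (d - m) → ℝ) (β : ℝ) (hβ : |β| < 1)
    (p : (Fin m → ℝ) × (Fin (d - m) → ℝ)) :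
    DifferentiableAt ℝ (couplingT m (d - m) s q ζ β) p ∧
    (fderiv ℝ (couplingT m (d - m) s q ζ β) p).det =
      ∏ i : Fin (d - m), (1 + β * Real.tanh (s p.1 i)) ∧
    0 < ∏ i : Fin (d - m), (1 + β * Real.tanh (s p.1 i)) := by
  have hT := differentiable_couplingT hs hq ζ β p
  refine ⟨hT, ?_, Finset.prod_pos fun i _ => one_add_mul_tanh_pos hβ _⟩
  rw [det_fderiv_eq_det_fderiv_snd_of_fst_eq (T := couplingT m (d - m) s q ζ β) (fun _ => rfl) hT]
  exact det_fderiv_mul_add (fun i => 1 + β * Real.tanh (s p.1 i))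
    (fun i => Real.exp (ζ i) * Real.tanh (q p.1 i)) p.2

theorem stmt11 (d m : ℕ) (hd : 2 ≤ d) (hm : 1 ≤ m) (hmd : m < d)
    (s q : (Fin m → ℝ) → Fin (d - m) → ℝ)
    (hs : Differentiable ℝ s) (hq : Differentiable ℝ q)
    (ζ : Fin (d - m) → ℝ) (β : ℝ) (hβ : |β| < 1)
    (p : (Fin m → ℝ) × (Fin (d - m) → ℝ)) :
    DifferentiableAt ℝ (couplingT m (d - m) s q ζ β) p ∧
    (fderiv ℝ (couplingT m (d - m) s q ζ β) p).det =
      ∏ i : Fin (d - m), (1 + β * Real.tanh (s p.1 i)) ∧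
    0 < ∏ i : Fin (d - m), (1 + β * Real.tanh (s p.1 i)) :=
  stmt11_general d m s q hs hq ζ β hβ p
end
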